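/- Let v : ℝ → [0, ∞) be C¹, K > 0, Ñ : ℝ → ℝ be C¹, Z ∈ ℝ, and define H(Δ, s; ξ) := (s² + 1 + v(ξ))/(2s) + K(∫_Z^{Z+Δ} Ñ(ζ) dζ − Ñ(Z) Δ) for s > 0. If ξ ↦ (Δ̂(ξ), ŝ(ξ)) is a C¹ solution of Δ̂' = (1 + v)/(2ŝ²) − 1/2, ŝ' = K[Ñ(Z + Δ̂) − Ñ(Z)] with ŝ > 0, then (d/dξ) H(Δ̂(ξ), ŝ(ξ); ξ) = v'(ξ)/(2 ŝ(ξ)). In particular, if v(0) = 0, Δ̂(0) = 0, ŝ(0) = 1, then H(Δ̂(ξ), ŝ(ξ); ξ) = 1 + ∫₀^ξ v'(η)/(2 ŝ(η)) dη for all ξ ≥ 0; and if v is constant on [l, ∞), then H(Δ̂(ξ), ŝ(ξ); ξ) is constant on [l, ∞). -/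

import Mathlib

/-!
The system `Δ̂' = -∂H/∂s`, `ŝ' = ∂H/∂Δ` is Hamiltonian in the pair `(Δ, s)`, so along a solution
the two partial contributions to `dH/dξ` cancel and only the explicit dependence on `ξ` through
`v` survives: `dH/dξ = ∂H/∂ξ = v'/(2ŝ)`. The two integrated forms follow from the fundamental
theorem of calculus and, after the pulse, from `v' = 0`.
-/

open Set

noncomputable section

/-- The kinetic part `γ(s; ξ)` of the Hamiltonian. -/
def lorentzFactor (v : ℝ → ℝ) (s ξ : ℝ) : ℝ := (s ^ 2 + 1 + v ξ) / (2 * s)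

/-- The potential part `U(Δ; Z)` of the Hamiltonian. -/
def layerPotential (K : ℝ) (N : ℝ → ℝ) (Z Δ : ℝ) : ℝ :=
  K * ((∫ ζ in Z..(Z + Δ), N ζ) - N Z * Δ)

end

theorem hasDerivAt_lorentzFactor {v s : ℝ → ℝ} {v' s' ξ : ℝ} (hv : HasDerivAt v v' ξ)
    (hs : HasDerivAt s s' ξ) (hs0 : s ξ ≠ 0) :
    HasDerivAt (fun η => lorentzFactor v (s η) η)
      (v' / (2 * s ξ) + (1 / 2 - (1 + v ξ) / (2 * s ξ ^ 2)) * s') ξ := by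
  have hnum : HasDerivAt (fun η => s η ^ 2 + 1 + v η) (2 * s ξ * s' + v') ξ :=
    (((hs.pow 2).add_const 1).add hv).congr_deriv (by ring)
  refine (hnum.div (hs.const_mul 2) (by positivity)).congr_deriv ?_
  field_simp
  ring

theorem hasDerivAt_layerPotential {N D : ℝ → ℝ} {K Z D' ξ : ℝ} (hN : Continuous N)
    (hD : HasDerivAt D D' ξ) :
    HasDerivAt (fun η => layerPotential K N Z (D η)) (K * (N (Z + D ξ) - N Z) * D') ξ := by
  have hint := (hN.integral_hasStrictDerivAt Z (Z + D ξ)).hasDerivAt.comp ξ (hD.const_add Z)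
  refine ((hint.sub (hD.const_mul (N Z))).const_mul K).congr_deriv ?_
  ring

theorem hasDerivAt_energy_of_isSolution {v N D s : ℝ → ℝ} {K Z v' ξ : ℝ}
    (hv : HasDerivAt v v' ξ) (hN : Continuous N) (hs0 : s ξ ≠ 0)
    (hD : HasDerivAt D ((1 + v ξ) / (2 * s ξ ^ 2) - 1 / 2) ξ)
    (hs : HasDerivAt s (K * (N (Z + D ξ) - N Z)) ξ) :
    HasDerivAt (fun η => lorentzFactor v (s η) η + layerPotential K N Z (D η))
      (v' / (2 * s ξ)) ξ :=
  ((hasDerivAt_lorentzFactor hv hs hs0).add (hasDerivAt_layerPotential hN hD)).congr_deriv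
    (by ring)

theorem deriv_eq_zero_of_forall_le_eq {v : ℝ → ℝ} {a ξ : ℝ} (h : ∀ η, a ≤ η → v η = v a)
    (haξ : a ≤ ξ) (hv : DifferentiableAt ℝ v ξ) : deriv v ξ = 0 := by
  have hconst : HasDerivWithinAt v 0 (Ici ξ) ξ :=
    (hasDerivWithinAt_const ξ (Ici ξ) (v a)).congr
      (fun η hη => h η (haξ.trans hη)) (h ξ haξ)
  exact (uniqueDiffWithinAt_Ici ξ).eq_deriv _ hv.hasDerivAt.hasDerivWithinAt hconst

theorem stmt_6_general (v : ℝ → ℝ) (hv : ContDiff ℝ 1 v)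
    (K : ℝ) (N : ℝ → ℝ) (hN : ContDiff ℝ 1 N) (Z : ℝ)
    (H : ℝ → ℝ → ℝ → ℝ)
    (hH : ∀ Δ s ξ, 0 < s → H Δ s ξ
      = (s ^ 2 + 1 + v ξ) / (2 * s) + K * ((∫ ζ in Z..(Z + Δ), N ζ) - N Z * Δ))
    (D s : ℝ → ℝ) (hspos : ∀ ξ, 0 < s ξ)
    (hDeq : ∀ ξ, HasDerivAt D ((1 + v ξ) / (2 * (s ξ) ^ 2) - 1 / 2) ξ)
    (hseq : ∀ ξ, HasDerivAt s (K * (N (Z + D ξ) - N Z)) ξ) :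
    (∀ ξ, HasDerivAt (fun η => H (D η) (s η) η) (deriv v ξ / (2 * s ξ)) ξ) ∧
    (v 0 = 0 → D 0 = 0 → s 0 = 1 →
      ∀ ξ : ℝ, 0 ≤ ξ →
        H (D ξ) (s ξ) ξ = 1 + ∫ η in (0:ℝ)..ξ, deriv v η / (2 * s η)) ∧
    (∀ l : ℝ, (∀ ξ : ℝ, l ≤ ξ → v ξ = v l) →
      ∀ ξ : ℝ, l ≤ ξ → H (D ξ) (s ξ) ξ = H (D l) (s l) l) := by
  have hvd : Differentiable ℝ v := hv.differentiable one_ne_zero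
  have hE : (fun η => H (D η) (s η) η)
      = fun η => lorentzFactor v (s η) η + layerPotential K N Z (D η) :=
    funext fun η => hH _ _ _ (hspos η)
  have hderiv (ξ : ℝ) : HasDerivAt (fun η => H (D η) (s η) η) (deriv v ξ / (2 * s ξ)) ξ :=
    hE ▸ hasDerivAt_energy_of_isSolution (hvd ξ).hasDerivAt hN.continuous (hspos ξ).ne'
      (hDeq ξ) (hseq ξ)
  refine ⟨hderiv, fun hv0 hD0 hs0 ξ _ => ?_, fun l hl ξ hlξ => ?_⟩
  · have hcont : Continuous fun η => deriv v η / (2 * s η) :=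
      (hv.continuous_deriv le_rfl).div (continuous_const.mul
        (continuous_iff_continuousAt.2 fun η => (hseq η).continuousAt))
        fun η => by positivity [hspos η]
    have hftc := intervalIntegral.integral_eq_sub_of_hasDerivAt (fun η _ => hderiv η)
      (hcont.intervalIntegrable 0 ξ)
    have hinit : H (D 0) (s 0) 0 = 1 := by
      rw [hH _ _ _ (hspos 0), hv0, hD0, hs0]
      norm_num
    linarith
  · refine constant_of_has_deriv_right_zero
      (fun η _ => (hderiv η).continuousAt.continuousWithinAt)
      (fun η hη => ?_) ξ ⟨hlξ, le_rfl⟩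
    simpa [deriv_eq_zero_of_forall_le_eq hl hη.1 (hvd η)] using (hderiv η).hasDerivWithinAt

/-- Along a solution of `Δ̂' = (1+v)/(2ŝ²) - 1/2`, `ŝ' = K[Ñ(Z+Δ̂) - Ñ(Z)]` with
`ŝ > 0`, the energy `H(Δ̂(ξ), ŝ(ξ); ξ)` has derivative `v'(ξ)/(2ŝ(ξ))`; with the
initial data `v(0)=0, Δ̂(0)=0, ŝ(0)=1` it equals `1 + ∫₀^ξ v'/(2ŝ)`, and it is
constant on `[l,∞)` if `v` is constant there. -/
theorem stmt_6 (v : ℝ → ℝ) (hv : ContDiff ℝ 1 v)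
    (K : ℝ) (hK : 0 < K) (N : ℝ → ℝ) (hN : ContDiff ℝ 1 N) (Z : ℝ)
    (H : ℝ → ℝ → ℝ → ℝ)
    (hH : ∀ Δ s ξ, 0 < s → H Δ s ξ
      = (s ^ 2 + 1 + v ξ) / (2 * s) + K * ((∫ ζ in Z..(Z + Δ), N ζ) - N Z * Δ))
    (D s : ℝ → ℝ) (hD : ContDiff ℝ 1 D) (hs : ContDiff ℝ 1 s) (hspos : ∀ ξ, 0 < s ξ)
    (hDeq : ∀ ξ, HasDerivAt D ((1 + v ξ) / (2 * (s ξ) ^ 2) - 1 / 2) ξ)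
    (hseq : ∀ ξ, HasDerivAt s (K * (N (Z + D ξ) - N Z)) ξ) :
    (∀ ξ, HasDerivAt (fun η => H (D η) (s η) η) (deriv v ξ / (2 * s ξ)) ξ) ∧
    (v 0 = 0 → D 0 = 0 → s 0 = 1 →
      ∀ ξ : ℝ, 0 ≤ ξ →
        H (D ξ) (s ξ) ξ = 1 + ∫ η in (0:ℝ)..ξ, deriv v η / (2 * s η)) ∧
    (∀ l : ℝ, (∀ ξ : ℝ, l ≤ ξ → v ξ = v l) →
      ∀ ξ : ℝ, l ≤ ξ → H (D ξ) (s ξ) ξ = H (D l) (s l) l) :=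
  stmt_6_general v hv K N hN Z H hH D s hspos hDeq hseq
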